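/- arXiv:2509.20917 — 2 statements merged into one kernel-verified Lean document; each statement's English description precedes it below -/
import Mathlib

section
/- Let h : ℝ → ℝ be defined by h(α) = 12/(1−α)⁺ + 6/(αD)⁺ where D > 0 and 1/(t)⁺ := 1/t if t > 0 and +∞ otherwise. The minimum of h over α ∈ (0,1) (after optimizing the separating plane between two point clusters at distance D, with n = α(x₁−x₂)/‖x₁−x₂‖·scale) yields the closed-form value 12·(1 + 1/√D)², i.e., for two distinct points x₁, x₂ ∈ ℝ³ at distance D, min over separating planes p=(n,d) of [12/(1−‖n‖)⁺ + 3/((⟨x₁,n⟩+d))⁺ + 3/((−⟨x₂,n⟩−d))⁺] = 12(1 + 1/√D)². -/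
/-!
A plane `⟪·, n⟫ + d = 0` with `‖n‖ = a` leaves gaps `s = ⟪x₁, n⟫ + d` and `u = -⟪x₂, n⟫ - d`
with `s + u = ⟪x₁ - x₂, n⟫ ≤ a D`. Two applications of Sedrakyan's inequality
`(p + q)² / (x + y) ≤ p² / x + q² / y` then give
`12 / (1 - a) + 3 / s + 3 / u ≥ 12 / (1 - a) + 12 / (a D) ≥ 12 (1 + 1 / √D)²`,
and both are equalities for the perpendicular bisector plane scaled to `a = 1 / (1 + √D)`.
-/

open scoped RealInnerProductSpace ENNReal

/-- The globally supported barrier `1/(t)⁺`, valued `+∞` for `t ≤ 0`. -/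
noncomputable def barrier (t : ℝ) : ℝ≥0∞ :=
  if 0 < t then ENNReal.ofReal (1 / t) else ⊤

lemma barrier_of_pos {t : ℝ} (ht : 0 < t) : barrier t = ENNReal.ofReal (1 / t) := if_pos ht

lemma barrier_of_nonpos {t : ℝ} (ht : t ≤ 0) : barrier t = ⊤ := if_neg ht.not_gt

lemma ofReal_mul_barrier {k t : ℝ} (hk : 0 ≤ k) (ht : 0 < t) :
    ENNReal.ofReal k * barrier t = ENNReal.ofReal (k / t) := by
  rw [barrier_of_pos ht, ← ENNReal.ofReal_mul hk, mul_one_div]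

lemma centered_barrier_sum_of_pos {a b c : ℝ} (ha : 0 < a) (hb : 0 < b) (hc : 0 < c) :
    12 * barrier a + 3 * barrier b + 3 * barrier c
      = ENNReal.ofReal (12 / a + 3 / b + 3 / c) := by
  rw [← ENNReal.ofReal_ofNat 12, ← ENNReal.ofReal_ofNat 3, ofReal_mul_barrier (by norm_num) ha,
    ofReal_mul_barrier (by norm_num) hb, ofReal_mul_barrier (by norm_num) hc,
    ← ENNReal.ofReal_add (by positivity) (by positivity),
    ← ENNReal.ofReal_add (by positivity) (by positivity)]

lemma centered_barrier_sum_eq_top {a b c : ℝ} (h : a ≤ 0 ∨ b ≤ 0 ∨ c ≤ 0) :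
    12 * barrier a + 3 * barrier b + 3 * barrier c = ⊤ := by
  rcases h with h | h | h <;> simp [barrier_of_nonpos h]

lemma add_sq_div_add_le_sq_div_add_sq_div {R : Type*} [Field R] [LinearOrder R]
    [IsStrictOrderedRing R] {x y : R} (p q : R) (hx : 0 < x) (hy : 0 < y) :
    (p + q) ^ 2 / (x + y) ≤ p ^ 2 / x + q ^ 2 / y := by
  simpa [Fin.sum_univ_two] using
    Finset.sq_sum_div_le_sum_sq_div Finset.univ ![p, q] (g := ![x, y])
      (by simp [Fin.forall_fin_two, hx, hy])

lemma sq_one_add_le_one_div_one_sub_add_sq_div {a : ℝ} (c : ℝ) (ha₀ : 0 < a) (ha₁ : a < 1) :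
    (1 + c) ^ 2 ≤ 1 / (1 - a) + c ^ 2 / a := by
  simpa using add_sq_div_add_le_sq_div_add_sq_div 1 c (sub_pos.2 ha₁) ha₀

lemma centered_potential_ge {D a s u : ℝ} (hD : 0 < D) (ha : a < 1) (hs : 0 < s) (hu : 0 < u)
    (hsu : s + u ≤ a * D) :
    12 * (1 + 1 / √D) ^ 2 ≤ 12 / (1 - a) + 3 / s + 3 / u := by
  have ha₀ : 0 < a := pos_of_mul_pos_left (by linarith) hD.le
  have harmonic : 12 / (a * D) ≤ 3 / s + 3 / u :=
    calc 12 / (a * D) ≤ 12 / (s + u) := by gcongr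
      _ = 3 * ((1 + 1) ^ 2 / (s + u)) := by ring
      _ ≤ 3 * (1 ^ 2 / s + 1 ^ 2 / u) := by
        gcongr; exact add_sq_div_add_le_sq_div_add_sq_div 1 1 hs hu
      _ = 3 / s + 3 / u := by ring
  have hsq : (1 / √D) ^ 2 = 1 / D := by rw [div_pow, Real.sq_sqrt hD.le, one_pow]
  calc 12 * (1 + 1 / √D) ^ 2 ≤ 12 * (1 / (1 - a) + (1 / √D) ^ 2 / a) := by
        gcongr; exact sq_one_add_le_one_div_one_sub_add_sq_div _ ha₀ ha
    _ = 12 / (1 - a) + 12 / (a * D) := by rw [hsq]; field_simp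
    _ ≤ 12 / (1 - a) + 3 / s + 3 / u := by linarith

lemma centered_potential_at_optimum {D : ℝ} (hD : 0 < D) :
    12 / (1 - 1 / (1 + √D)) + 3 / (1 / (1 + √D) * D / 2) + 3 / (1 / (1 + √D) * D / 2)
      = 12 * (1 + 1 / √D) ^ 2 := by
  have ht : 0 < √D := Real.sqrt_pos.2 hD
  have hD' : D = √D ^ 2 := (Real.sq_sqrt hD.le).symm
  set t := √D
  have hcompl : 1 - 1 / (1 + t) = t / (1 + t) := by field_simp; ring
  rw [hD', hcompl]
  field_simp
  ring

section Plane

variable {E : Type*} [NormedAddCommGroup E] [InnerProductSpace ℝ E]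

lemma inner_add_neg_inner_sub_le (x₁ x₂ n : E) (d : ℝ) :
    (⟪x₁, n⟫ + d) + (-⟪x₂, n⟫ - d) ≤ ‖n‖ * ‖x₁ - x₂‖ := by
  calc (⟪x₁, n⟫ + d) + (-⟪x₂, n⟫ - d) = ⟪x₁ - x₂, n⟫ := by rw [inner_sub_left]; ring
    _ ≤ ‖x₁ - x₂‖ * ‖n‖ := real_inner_le_norm _ _
    _ = ‖n‖ * ‖x₁ - x₂‖ := mul_comm _ _

lemma exists_bisecting_plane {x₁ x₂ : E} (h : x₁ ≠ x₂) {a : ℝ} (ha : 0 ≤ a) :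
    ∃ n : E, ∃ d : ℝ, ‖n‖ = a ∧ ⟪x₁, n⟫ + d = a * ‖x₁ - x₂‖ / 2
      ∧ -⟪x₂, n⟫ - d = a * ‖x₁ - x₂‖ / 2 := by
  have hv : 0 < ‖x₁ - x₂‖ := norm_pos_iff.2 (sub_ne_zero.2 h)
  set n := (a / ‖x₁ - x₂‖) • (x₁ - x₂)
  have hgap : ⟪x₁, n⟫ - ⟪x₂, n⟫ = a * ‖x₁ - x₂‖ := by
    rw [← inner_sub_left, real_inner_smul_right, real_inner_self_eq_norm_sq]
    field_simp
  refine ⟨n, a * ‖x₁ - x₂‖ / 2 - ⟪x₁, n⟫, ?_, by ring, by linarith⟩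
  rw [norm_smul, Real.norm_of_nonneg (by positivity)]
  field_simp

end Plane

/-- Centered potential computation: for two distinct points `x₁, x₂ ∈ ℝ³` at distance `D > 0`,
the infimum over separating planes `p = (n, d)` of
`12/(1−‖n‖)⁺ + 3/(⟨x₁,n⟩+d)⁺ + 3/(−⟨x₂,n⟩−d)⁺` equals `12(1 + 1/√D)²`. -/
theorem centered_potential_closed_form (x₁ x₂ : EuclideanSpace ℝ (Fin 3)) (D : ℝ)
    (hD : 0 < D) (hdist : ‖x₁ - x₂‖ = D) :
    (⨅ p : EuclideanSpace ℝ (Fin 3) × ℝ,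
        12 * barrier (1 - ‖p.1‖) + 3 * barrier (⟪x₁, p.1⟫ + p.2)
          + 3 * barrier (-⟪x₂, p.1⟫ - p.2))
      = ENNReal.ofReal (12 * (1 + 1 / Real.sqrt D) ^ 2) := by
  have hne : x₁ ≠ x₂ := by rintro rfl; rw [sub_self, norm_zero] at hdist; linarith
  apply le_antisymm
  · have ha : 1 / (1 + √D) < 1 := by
      rw [div_lt_one (by positivity)]; linarith [Real.sqrt_pos.2 hD]
    obtain ⟨n, d, hn, h₁, h₂⟩ := exists_bisecting_plane hne (a := 1 / (1 + √D)) (by positivity)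
    rw [hdist] at h₁ h₂
    refine (iInf_le _ (n, d)).trans_eq ?_
    dsimp only
    rw [hn, h₁, h₂, centered_barrier_sum_of_pos (by linarith) (by positivity) (by positivity),
      centered_potential_at_optimum hD]
  · refine le_iInf fun ⟨n, d⟩ => ?_
    by_cases hpos : 0 < 1 - ‖n‖ ∧ 0 < ⟪x₁, n⟫ + d ∧ 0 < -⟪x₂, n⟫ - d
    · obtain ⟨h₀, h₁, h₂⟩ := hpos
      rw [centered_barrier_sum_of_pos h₀ h₁ h₂]
      refine ENNReal.ofReal_le_ofReal (centered_potential_ge hD (sub_pos.1 h₀) h₁ h₂ ?_)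
      simpa [hdist] using inner_add_neg_inner_sub_le x₁ x₂ n d
    · simp only [not_and_or, not_lt] at hpos
      rw [centered_barrier_sum_eq_top hpos]
      exact le_top
end

section
/- For the distance d(x) from the point (x, 1) to the segment from (1,0) to (2,0), let d(x) = √((x−1)²+1) for x ≤ 1, d(x) = 1 for 1 ≤ x ≤ 2, d(x) = √((x−2)²+1) for x ≥ 2. Then d is continuously differentiable on ℝ but d' is not differentiable at x = 1 (and x = 2); hence −log(d(x)) is C¹ but not C² at x = 1. -/
open Set

/-- The distance from the point `(x, 1)` to the segment from `(1,0)` to `(2,0)`. -/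
noncomputable def segDist (x : ℝ) : ℝ :=
  if x ≤ 1 then Real.sqrt ((x - 1) ^ 2 + 1)
  else if x ≤ 2 then 1
  else Real.sqrt ((x - 2) ^ 2 + 1)

/-- The candidate derivative of `segDist`. -/
noncomputable def segDeriv (x : ℝ) : ℝ :=
  if x ≤ 1 then (x - 1) / Real.sqrt ((x - 1) ^ 2 + 1)
  else if x ≤ 2 then 0
  else (x - 2) / Real.sqrt ((x - 2) ^ 2 + 1)

lemma sqrt_aux_pos (a x : ℝ) : 0 < Real.sqrt ((x - a) ^ 2 + 1) :=
  Real.sqrt_pos.mpr (by positivity)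

lemma hasDerivAt_branch (a x : ℝ) :
    HasDerivAt (fun y => Real.sqrt ((y - a) ^ 2 + 1))
      ((x - a) / Real.sqrt ((x - a) ^ 2 + 1)) x := by
  have h0 : (x - a) ^ 2 + 1 ≠ 0 := by positivity
  have hinner : HasDerivAt (fun y : ℝ => (y - a) ^ 2 + 1) (2 * (x - a)) x := by
    have := (((hasDerivAt_id x).sub_const a).pow 2).add_const 1
    simpa using this
  have := hinner.sqrt h0
  convert this using 1
  have hs : Real.sqrt ((x - a) ^ 2 + 1) ≠ 0 := (sqrt_aux_pos a x).ne'
  field_simp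

lemma segDist_pos (x : ℝ) : 0 < segDist x := by
  unfold segDist
  split_ifs <;> first | exact sqrt_aux_pos _ _ | norm_num

lemma segDist_left {y : ℝ} (hy : y ≤ 1) : segDist y = Real.sqrt ((y - 1) ^ 2 + 1) :=
  if_pos hy

lemma segDist_right {y : ℝ} (hy : 2 < y) : segDist y = Real.sqrt ((y - 2) ^ 2 + 1) := by
  unfold segDist
  rw [if_neg (not_le.mpr (lt_trans one_lt_two hy)), if_neg (not_le.mpr hy)]

lemma segDeriv_left {y : ℝ} (hy : y ≤ 1) :
    segDeriv y = (y - 1) / Real.sqrt ((y - 1) ^ 2 + 1) :=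
  if_pos hy

lemma segDeriv_right {y : ℝ} (hy : 2 < y) :
    segDeriv y = (y - 2) / Real.sqrt ((y - 2) ^ 2 + 1) := by
  unfold segDeriv
  rw [if_neg (not_le.mpr (lt_trans one_lt_two hy)), if_neg (not_le.mpr hy)]

lemma segDist_eqOn_mid : ∀ y ∈ Icc (1:ℝ) 2, segDist y = 1 := by
  intro y hy
  unfold segDist
  split_ifs with h1 h2
  · have : y = 1 := le_antisymm h1 hy.1
    simp [this]
  · rfl
  · exact absurd hy.2 h2

lemma segDeriv_eqOn_mid : ∀ y ∈ Icc (1:ℝ) 2, segDeriv y = 0 := by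
  intro y hy
  unfold segDeriv
  split_ifs with h1 h2
  · have : y = 1 := le_antisymm h1 hy.1
    simp [this]
  · rfl
  · exact absurd hy.2 h2

lemma myIcc_mem_nhdsWithin_Ici : Icc (1:ℝ) 2 ∈ nhdsWithin 1 (Ici 1) := by
  rw [← Set.Ici_inter_Iic]
  exact Filter.inter_mem self_mem_nhdsWithin
    (mem_nhdsWithin_of_mem_nhds (Iic_mem_nhds one_lt_two))

lemma myIcc_mem_nhdsWithin_Iic : Icc (1:ℝ) 2 ∈ nhdsWithin 2 (Iic 2) := by
  rw [← Set.Ici_inter_Iic]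
  exact Filter.inter_mem
    (mem_nhdsWithin_of_mem_nhds (Ici_mem_nhds one_lt_two)) self_mem_nhdsWithin

lemma hasDerivAt_segDist (x : ℝ) : HasDerivAt segDist (segDeriv x) x := by
  rcases lt_trichotomy x 1 with hx1 | rfl | hx1
  · have heq : segDist =ᶠ[nhds x] fun y => Real.sqrt ((y - 1) ^ 2 + 1) := by
      filter_upwards [Iio_mem_nhds hx1] with y hy
      exact segDist_left (le_of_lt hy)
    have := (hasDerivAt_branch 1 x).congr_of_eventuallyEq heq
    simpa [segDeriv, le_of_lt hx1] using this
  · -- x = 1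
    have hL : HasDerivWithinAt segDist 0 (Iic 1) 1 := by
      have h := (hasDerivAt_branch 1 1).hasDerivWithinAt (s := Iic 1)
      have h' : HasDerivWithinAt segDist ((1 - 1) / Real.sqrt ((1 - 1) ^ 2 + 1))
          (Iic 1) 1 :=
        h.congr (fun y hy => segDist_left hy) (segDist_left le_rfl)
      simpa using h'
    have hR : HasDerivWithinAt segDist 0 (Ici 1) 1 := by
      have h : HasDerivWithinAt (fun _ : ℝ => (1:ℝ)) 0 (Icc 1 2) 1 :=
        (hasDerivAt_const 1 (1:ℝ)).hasDerivWithinAt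
      have h' : HasDerivWithinAt segDist 0 (Icc 1 2) 1 :=
        h.congr (fun y hy => segDist_eqOn_mid y hy)
          (segDist_eqOn_mid 1 (by norm_num))
      exact h'.mono_of_mem_nhdsWithin myIcc_mem_nhdsWithin_Ici
    have := hL.union hR
    rw [Set.Iic_union_Ici, hasDerivWithinAt_univ] at this
    simpa [segDeriv] using this
  · rcases lt_trichotomy x 2 with hx2 | rfl | hx2
    · have heq : segDist =ᶠ[nhds x] fun _ => (1:ℝ) := by
        filter_upwards [Ioo_mem_nhds hx1 hx2] with y hy
        exact segDist_eqOn_mid y ⟨le_of_lt hy.1, le_of_lt hy.2⟩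
      have := (hasDerivAt_const x (1:ℝ)).congr_of_eventuallyEq heq
      simpa [segDeriv, not_le.mpr hx1, le_of_lt hx2] using this
    · -- x = 2
      have hL : HasDerivWithinAt segDist 0 (Iic 2) 2 := by
        have h : HasDerivWithinAt (fun _ : ℝ => (1:ℝ)) 0 (Icc 1 2) 2 :=
          (hasDerivAt_const 2 (1:ℝ)).hasDerivWithinAt
        have h' : HasDerivWithinAt segDist 0 (Icc 1 2) 2 :=
          h.congr (fun y hy => segDist_eqOn_mid y hy)
            (segDist_eqOn_mid 2 (by norm_num))
        exact h'.mono_of_mem_nhdsWithin myIcc_mem_nhdsWithin_Iic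
      have hR : HasDerivWithinAt segDist 0 (Ici 2) 2 := by
        have h := (hasDerivAt_branch 2 2).hasDerivWithinAt (s := Ici 2)
        have h' : HasDerivWithinAt segDist ((2 - 2) / Real.sqrt ((2 - 2) ^ 2 + 1))
            (Ici 2) 2 := by
          refine h.congr (fun y hy => ?_) ?_
          · rcases eq_or_lt_of_le (Set.mem_Ici.mp hy) with h2 | h2
            · rw [segDist_eqOn_mid y (by rw [← h2]; norm_num)]
              norm_num [← h2]
            · exact segDist_right h2
          · rw [segDist_eqOn_mid 2 (by norm_num)]
            norm_num
        simpa using h'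
      have := hL.union hR
      rw [Set.Iic_union_Ici, hasDerivWithinAt_univ] at this
      simpa [segDeriv, not_le.mpr hx1] using this
    · have heq : segDist =ᶠ[nhds x] fun y => Real.sqrt ((y - 2) ^ 2 + 1) := by
        filter_upwards [Ioi_mem_nhds hx2] with y hy
        exact segDist_right hy
      have := (hasDerivAt_branch 2 x).congr_of_eventuallyEq heq
      simpa [segDeriv, not_le.mpr hx1, not_le.mpr hx2] using this

lemma continuous_segDeriv : Continuous segDeriv := by
  have hbr : ∀ a : ℝ, Continuous fun x : ℝ => (x - a) / Real.sqrt ((x - a) ^ 2 + 1) := by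
    intro a
    exact (continuous_id.sub continuous_const).div
      (Real.continuous_sqrt.comp (by continuity))
      (fun x => (sqrt_aux_pos a x).ne')
  unfold segDeriv
  apply Continuous.if_le (hbr 1) _ continuous_id continuous_const
  · intro x hx
    subst hx
    norm_num
  · apply Continuous.if_le continuous_const (hbr 2) continuous_id continuous_const
    intro x hx
    subst hx
    norm_num

lemma deriv_segDist : deriv segDist = segDeriv :=
  funext fun x => (hasDerivAt_segDist x).deriv

lemma segDist_contDiff : ContDiff ℝ 1 segDist :=
  contDiff_one_iff_deriv.mpr
    ⟨fun x => (hasDerivAt_segDist x).differentiableAt,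
      deriv_segDist ▸ continuous_segDeriv⟩

lemma hasDerivAt_branchDeriv (a : ℝ) :
    HasDerivAt (fun y => (y - a) / Real.sqrt ((y - a) ^ 2 + 1)) 1 a := by
  have hnum : HasDerivAt (fun y : ℝ => y - a) 1 a := (hasDerivAt_id a).sub_const a
  have hden := hasDerivAt_branch a a
  have hne : Real.sqrt ((a - a) ^ 2 + 1) ≠ 0 := (sqrt_aux_pos a a).ne'
  have := hnum.fun_div hden hne
  refine this.congr_deriv ?_
  norm_num

lemma not_diff_segDeriv_one : ¬ DifferentiableAt ℝ segDeriv 1 := by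
  intro h
  have hc : HasDerivAt segDeriv (deriv segDeriv 1) 1 := h.hasDerivAt
  have hL : HasDerivWithinAt segDeriv 1 (Iic 1) 1 := by
    refine (hasDerivAt_branchDeriv 1).hasDerivWithinAt.congr
      (fun y hy => segDeriv_left hy) (segDeriv_left le_rfl)
  have hR : HasDerivWithinAt segDeriv 0 (Ici 1) 1 := by
    have h0 : HasDerivWithinAt (fun _ : ℝ => (0:ℝ)) 0 (Icc 1 2) 1 :=
      (hasDerivAt_const 1 (0:ℝ)).hasDerivWithinAt
    have h' : HasDerivWithinAt segDeriv 0 (Icc 1 2) 1 :=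
      h0.congr (fun y hy => segDeriv_eqOn_mid y hy) (segDeriv_eqOn_mid 1 (by norm_num))
    exact h'.mono_of_mem_nhdsWithin myIcc_mem_nhdsWithin_Ici
  have e1 : derivWithin segDeriv (Iic 1) 1 = 1 :=
    hL.derivWithin (uniqueDiffOn_Iic 1 1 Set.self_mem_Iic)
  have e2 : derivWithin segDeriv (Iic 1) 1 = deriv segDeriv 1 :=
    hc.hasDerivWithinAt.derivWithin (uniqueDiffOn_Iic 1 1 Set.self_mem_Iic)
  have e3 : derivWithin segDeriv (Ici 1) 1 = 0 :=
    hR.derivWithin (uniqueDiffOn_Ici 1 1 Set.self_mem_Ici)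
  have e4 : derivWithin segDeriv (Ici 1) 1 = deriv segDeriv 1 :=
    hc.hasDerivWithinAt.derivWithin (uniqueDiffOn_Ici 1 1 Set.self_mem_Ici)
  rw [e2] at e1
  rw [e4] at e3
  rw [e1] at e3
  norm_num at e3

lemma not_diff_segDeriv_two : ¬ DifferentiableAt ℝ segDeriv 2 := by
  intro h
  have hc : HasDerivAt segDeriv (deriv segDeriv 2) 2 := h.hasDerivAt
  have hL : HasDerivWithinAt segDeriv 0 (Iic 2) 2 := by
    have h0 : HasDerivWithinAt (fun _ : ℝ => (0:ℝ)) 0 (Icc 1 2) 2 :=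
      (hasDerivAt_const 2 (0:ℝ)).hasDerivWithinAt
    have h' : HasDerivWithinAt segDeriv 0 (Icc 1 2) 2 :=
      h0.congr (fun y hy => segDeriv_eqOn_mid y hy) (segDeriv_eqOn_mid 2 (by norm_num))
    exact h'.mono_of_mem_nhdsWithin myIcc_mem_nhdsWithin_Iic
  have hR : HasDerivWithinAt segDeriv 1 (Ici 2) 2 := by
    refine (hasDerivAt_branchDeriv 2).hasDerivWithinAt.congr (fun y hy => ?_) ?_
    · rcases eq_or_lt_of_le (Set.mem_Ici.mp hy) with h2 | h2
      · rw [segDeriv_eqOn_mid y (by rw [← h2]; norm_num)]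
        norm_num [← h2]
      · exact segDeriv_right h2
    · rw [segDeriv_eqOn_mid 2 (by norm_num)]
      norm_num
  have e1 : derivWithin segDeriv (Iic 2) 2 = 0 :=
    hL.derivWithin (uniqueDiffOn_Iic 2 2 Set.self_mem_Iic)
  have e2 : derivWithin segDeriv (Iic 2) 2 = deriv segDeriv 2 :=
    hc.hasDerivWithinAt.derivWithin (uniqueDiffOn_Iic 2 2 Set.self_mem_Iic)
  have e3 : derivWithin segDeriv (Ici 2) 2 = 1 :=
    hR.derivWithin (uniqueDiffOn_Ici 2 2 Set.self_mem_Ici)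
  have e4 : derivWithin segDeriv (Ici 2) 2 = deriv segDeriv 2 :=
    hc.hasDerivWithinAt.derivWithin (uniqueDiffOn_Ici 2 2 Set.self_mem_Ici)
  rw [e2] at e1
  rw [e4] at e3
  rw [e1] at e3
  norm_num at e3

lemma hasDerivAt_negLog (x : ℝ) :
    HasDerivAt (fun y => -Real.log (segDist y)) (-(segDeriv x / segDist x)) x :=
  ((hasDerivAt_segDist x).log (segDist_pos x).ne').neg

lemma negLog_contDiff : ContDiff ℝ 1 (fun x => -Real.log (segDist x)) := by
  refine ContDiff.neg ?_
  rw [contDiff_iff_contDiffAt]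
  intro x
  exact (Real.contDiffAt_log.mpr (segDist_pos x).ne').comp x segDist_contDiff.contDiffAt

/-- IPC toy example: the point-segment distance `d` is continuously differentiable on `ℝ`,
but `d'` is not differentiable at `x = 1` (nor at `x = 2`); hence `−log ∘ d` is `C¹` but
not `C²` at `x = 1`. -/
theorem ipc_not_twice_differentiable :
    ContDiff ℝ 1 segDist ∧
      ¬ DifferentiableAt ℝ (deriv segDist) 1 ∧
      ¬ DifferentiableAt ℝ (deriv segDist) 2 ∧
      ContDiff ℝ 1 (fun x => -Real.log (segDist x)) ∧
      ¬ ContDiffAt ℝ 2 (fun x => -Real.log (segDist x)) 1 := by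
  refine ⟨segDist_contDiff, ?_, ?_, negLog_contDiff, ?_⟩
  · rw [deriv_segDist]; exact not_diff_segDeriv_one
  · rw [deriv_segDist]; exact not_diff_segDeriv_two
  · intro h2
    set f := fun x => -Real.log (segDist x) with hf
    obtain ⟨u, hu, hcd⟩ := h2.contDiffOn le_rfl (by norm_num)
    obtain ⟨v, hvu, hv_open, hxv⟩ := mem_nhds_iff.mp hu
    have hdf : DifferentiableAt ℝ (deriv f) 1 := by
      have := ((hcd.mono hvu).deriv_of_isOpen hv_open
        (le_refl ((1:WithTop ℕ∞) + 1))).differentiableOn one_ne_zero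
      exact this.differentiableAt (hv_open.mem_nhds hxv)
    have hderivf : deriv f = fun x => -(segDeriv x / segDist x) :=
      funext fun x => (hasDerivAt_negLog x).deriv
    rw [hderivf] at hdf
    have hprod : DifferentiableAt ℝ
        (fun x => -(segDeriv x / segDist x) * (-(segDist x))) 1 :=
      hdf.mul ((segDist_contDiff.differentiable one_ne_zero) 1).neg
    have heq : (fun x => -(segDeriv x / segDist x) * (-(segDist x))) = segDeriv := by
      funext x
      have := (segDist_pos x).ne'
      field_simp
    rw [heq] at hprod
    exact not_diff_segDeriv_one hprod
end
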